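/- arXiv:1103.2246 — 3 statements merged into one kernel-verified Lean document; each statement's English description precedes it below -/
import Mathlib

section
/- If two clock periods τ_i and τ_j each satisfy the bounded jitter condition 1 - δ ≤ τ/τ_ref ≤ 1 + δ with 0 < δ < 1 and τ_ref > 0, and π = (1 - δ)/(2δ), then π/(π + 1) ≤ min(τ_i, τ_j)/max(τ_i, τ_j). -/
/-! Since `π + 1 = (1 + δ)/(2δ)`, the bound `π/(π+1)` is just `(1 - δ)/(1 + δ)`. Both periods lie in
`[(1 - δ) τref, (1 + δ) τref]`, and for two points of a positive interval `[a, b]` the ratio of the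
smaller to the larger is at least `a/b`. -/

open Set

section

variable {K : Type*} [Field K] [LinearOrder K] [IsStrictOrderedRing K]

theorem div_le_min_div_max_of_mem_Icc {a b x y : K} (ha : 0 < a)
    (hx : x ∈ Icc a b) (hy : y ∈ Icc a b) : a / b ≤ min x y / max x y := by
  have hmin : a ≤ min x y := le_min hx.1 hy.1
  exact div_le_div₀ (ha.le.trans hmin) hmin (ha.trans_le (hmin.trans min_le_max))
    (max_le hx.2 hy.2)

theorem div_div_add_one_of_eq_div_two_mul {δ π : K} (hδ : δ ≠ 0)
    (hπ : π = (1 - δ) / (2 * δ)) : π / (π + 1) = (1 - δ) / (1 + δ) := by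
  have hπ1 : π + 1 = (1 + δ) / (2 * δ) := by
    rw [hπ]
    field_simp
    ring
  rw [hπ1, hπ, div_div_div_cancel_right₀ (mul_ne_zero two_ne_zero hδ)]

end

/-- Bounded clock jitter implies bounded clock drift:
if `1 - δ ≤ τ/τref ≤ 1 + δ` for both clocks and `π = (1-δ)/(2δ)`,
then `π/(π+1) ≤ min(τ_i,τ_j)/max(τ_i,τ_j)`. -/
theorem bounded_clock_drift
    (δ τref τi τj : ℝ)
    (hδ0 : 0 < δ) (hδ1 : δ < 1) (href : 0 < τref)
    (hi1 : 1 - δ ≤ τi / τref) (hi2 : τi / τref ≤ 1 + δ)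
    (hj1 : 1 - δ ≤ τj / τref) (hj2 : τj / τref ≤ 1 + δ)
    (π : ℝ) (hπ : π = (1 - δ) / (2 * δ)) :
    π / (π + 1) ≤ min τi τj / max τi τj := by
  have hτi : τi ∈ Icc ((1 - δ) * τref) ((1 + δ) * τref) :=
    ⟨(le_div_iff₀ href).mp hi1, (div_le_iff₀ href).mp hi2⟩
  have hτj : τj ∈ Icc ((1 - δ) * τref) ((1 + δ) * τref) :=
    ⟨(le_div_iff₀ href).mp hj1, (div_le_iff₀ href).mp hj2⟩
  calc π / (π + 1) = (1 - δ) / (1 + δ) := div_div_add_one_of_eq_div_two_mul hδ0.ne' hπ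
    _ = (1 - δ) * τref / ((1 + δ) * τref) := (mul_div_mul_right _ _ href.ne').symm
    _ ≤ min τi τj / max τi τj :=
      div_le_min_div_max_of_mem_Icc (mul_pos (sub_pos.mpr hδ1) href) hτi hτj
end

section
/- Let τ_s, τ_r > 0 be sender and receiver clock periods and e_s(c) = c·τ_s, e_r(ξ) = ξ·τ_r the edge times. Assume the clock drift bound π/(π+1) ≤ min(τ_s,τ_r)/max(τ_s,τ_r) for a real π ≥ 1, and suppose the mark relation holds: e_r(ξ) + t_h ∈ (e_s(c) + t_pmin, e_s(c) + t_pmin + τ_r]. Then for every natural number α with 0 < α ≤ π, there exists χ ∈ {-1, 0, 1} such that e_r(ξ + α + χ) + t_h ∈ (e_s(c + α) + t_pmin, e_s(c + α) + t_pmin + τ_r]. -/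
/-- More affected cycles: from the mark `cy(ξ, c)` and bounded drift,
for every `0 < α ≤ π` there is `χ ∈ {-1,0,1}` with `cy(ξ+α+χ, c+α)`. -/
theorem more_affected_cycles
    (τs τr t_h t_pmin π : ℝ) (ξ c : ℤ)
    (hτs : 0 < τs) (hτr : 0 < τr)
    (hth : 0 ≤ t_h) (htp : 0 ≤ t_pmin)
    (hsum : t_h + t_pmin < min τs τr)
    (hπ : 1 ≤ π)
    (hdrift : π / (π + 1) ≤ min τs τr / max τs τr)
    (hcy : (ξ : ℝ) * τr + t_h ∈ Set.Ioc ((c : ℝ) * τs + t_pmin) ((c : ℝ) * τs + t_pmin + τr)) :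
    ∀ α : ℕ, 0 < α → (α : ℝ) ≤ π →
      ∃ χ : ℤ, (χ = -1 ∨ χ = 0 ∨ χ = 1) ∧
        ((ξ + α + χ : ℤ) : ℝ) * τr + t_h ∈
          Set.Ioc (((c + α : ℤ) : ℝ) * τs + t_pmin) (((c + α : ℤ) : ℝ) * τs + t_pmin + τr) := by
  intro α hαpos hαπ
  obtain ⟨hlo, hhi⟩ := hcy
  have hmaxpos : 0 < max τs τr := lt_max_iff.mpr (Or.inl hτs)
  have hπpos : (0:ℝ) < π := by linarith
  have h1 : π * max τs τr ≤ min τs τr * (π + 1) := by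
    rw [div_le_div_iff₀ (by linarith) hmaxpos] at hdrift
    linarith
  have habs : |τs - τr| * π ≤ min τs τr := by
    rw [← max_sub_min_eq_abs, max_comm τr τs, min_comm τr τs]
    nlinarith
  have hαnn : (0:ℝ) ≤ (α : ℝ) := Nat.cast_nonneg α
  have hd : |(α : ℝ) * (τs - τr)| ≤ min τs τr := by
    rw [abs_mul, abs_of_nonneg hαnn]
    nlinarith [abs_nonneg (τs - τr)]
  have hmr : min τs τr ≤ τr := min_le_right _ _
  rw [abs_le] at hd
  set y : ℝ := (ξ : ℝ) * τr + t_h - ((c : ℝ) * τs + t_pmin) - (α : ℝ) * (τs - τr) with hy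
  rcases le_or_gt y 0 with h0 | h0
  · exact ⟨1, Or.inr (Or.inr rfl), by push_cast; constructor <;> [nlinarith; nlinarith]⟩
  rcases le_or_gt y τr with h2 | h2
  · exact ⟨0, Or.inr (Or.inl rfl), by push_cast; constructor <;> [nlinarith; nlinarith]⟩
  · exact ⟨-1, Or.inl rfl, by push_cast; constructor <;> [nlinarith; nlinarith]⟩
end

section
/- Under the drift bound π/(π+1) ≤ τ_r/τ_s ≤ (π+1)/π for real π ≥ 1 and α a natural number with 0 < α ≤ π, the receiver edge times satisfy |α·τ_r - α·τ_s| ≤ τ_s (equivalently, after α sender cycles the receiver can be off by at most one sender period). -/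
/-- After `α ≤ π` sender cycles, the receiver is off by at most one
sender period: `|α·τ_r - α·τ_s| ≤ τ_s`. -/
theorem drift_one_period (τs τr π : ℝ) (α : ℕ)
    (hτs : 0 < τs) (hτr : 0 < τr) (hπ : 1 ≤ π)
    (h1 : π / (π + 1) ≤ τr / τs) (h2 : τr / τs ≤ (π + 1) / π)
    (hα0 : 0 < α) (hαπ : (α : ℝ) ≤ π) :
    |(α : ℝ) * τr - (α : ℝ) * τs| ≤ τs := by
  have hπ0 : (0:ℝ) < π := by linarith
  have hπ1 : (0:ℝ) < π + 1 := by linarith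
  have hα : (0:ℝ) < (α:ℝ) := by exact_mod_cast hα0
  rw [div_le_div_iff₀ hπ1 hτs] at h1
  rw [div_le_div_iff₀ hτs hπ0] at h2
  rw [abs_le]
  constructor
  · -- τs - α*(τs - τr) from τs*(π) ≤ τr*(π+1): π*(τs-τr) ≤ τr
    -- need α*τs - α*τr ≤ τs, i.e., α*(τs-τr) ≤ τs
    nlinarith [mul_le_mul_of_nonneg_left (sub_nonneg.mpr hαπ) (le_of_lt hτs),
      mul_pos hα hτs, mul_le_mul_of_nonneg_right hαπ (le_of_lt hτs)]
  · nlinarith [mul_le_mul_of_nonneg_left (sub_nonneg.mpr hαπ) (le_of_lt hτs)]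
end
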